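/- Let A be a unital C*-algebra and a ∈ A a positive element. Then a is invertible in A if and only if the following two conditions hold together: (1) f(a) > 0 for every nonzero positive continuous linear functional f on A, and (2) there exist real numbers α, β with 0 < α < β and constants c, C > 0 such that c · r_{a^α}(f) ≤ r_{a^β}(f) ≤ C · r_{a^α}(f) for every hermitian continuous linear functional f on A. -/

import Mathlib

open scoped ComplexOrder NNReal

variable {A : Type*} [CStarAlgebra A] [PartialOrder A] [StarOrderedRing A]

/-- A continuous linear functional on a C*-algebra is positive if it is nonnegative on
positive elements (using the complex order). -/
def IsPosFunctional {A : Type*} [CStarAlgebra A] [PartialOrder A] [StarOrderedRing A]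
    (f : A →L[ℂ] ℂ) : Prop :=
  ∀ x : A, 0 ≤ x → 0 ≤ f x

/-- A continuous linear functional is hermitian if `f (star x) = conj (f x)` for all `x`. -/
def IsHermitianFunctional {A : Type*} [CStarAlgebra A] (f : A →L[ℂ] ℂ) : Prop :=
  ∀ x : A, f (star x) = starRingEnd ℂ (f x)

/-- The seminorm `r_a` associated with a positive element `a`:
`r_a(f) = inf { f₁(a) + f₂(a) | f = f₁ - f₂, f₁, f₂ positive }`. -/
noncomputable def rSeminorm {A : Type*} [CStarAlgebra A] [PartialOrder A] [StarOrderedRing A]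
    (a : A) (f : A →L[ℂ] ℂ) : ℝ :=
  sInf { r : ℝ | ∃ f₁ f₂ : A →L[ℂ] ℂ, IsPosFunctional f₁ ∧ IsPosFunctional f₂ ∧
    f = f₁ - f₂ ∧ (r : ℂ) = f₁ a + f₂ a }

/-!
If `a` is invertible, then `r ≤ a ≤ ‖a‖ + 1` for some `r > 0`, hence
`r • a ≤ a * a ≤ (‖a‖ + 1) • a`, as products of commuting positive elements are positive.
Since `r_b(f)` is monotone and positively homogeneous in the positive element `b`, this makes
`r_a` and `r_{a²}` equivalent (`α = 1`, `β = 2`); and `f(a) ≥ r f(1) > 0` for every nonzero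
positive `f`.

Conversely, faithfulness alone forces invertibility. If `0 ∈ σ(a)`, a character of `C*(a)`
vanishing at `a`, extended by Hahn–Banach, is a functional `g` with `g 1 = 1`, `‖g‖ ≤ 1` and
`g a = 0`. Such a `g` is positive: it is real on self-adjoint `x` because
`‖x + t i‖² ≤ ‖x‖² + t²` for all real `t`, and `Re g x ≥ 0` for `x ≥ 0` because
`‖‖x‖ - x‖ ≤ ‖x‖`.
-/

open Complex

namespace IsPosFunctional

variable {f : A →L[ℂ] ℂ}

lemma ofReal_re_apply (hf : IsPosFunctional f) {b : A} (hb : 0 ≤ b) : ((f b).re : ℂ) = f b :=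
  (eq_re_of_ofReal_le (r := 0) (by exact_mod_cast hf b hb)).symm

lemma re_apply_nonneg (hf : IsPosFunctional f) {b : A} (hb : 0 ≤ b) : 0 ≤ (f b).re :=
  (nonneg_iff.1 (hf b hb)).1

lemma mono (hf : IsPosFunctional f) {b b' : A} (h : b ≤ b') : f b ≤ f b' := by
  simpa using hf _ (sub_nonneg.2 h)

lemma re_mono (hf : IsPosFunctional f) {b b' : A} (h : b ≤ b') : (f b).re ≤ (f b').re :=
  (le_def.1 (hf.mono h)).1

lemma eq_zero_of_map_one_eq_zero (hf : IsPosFunctional f) (h1 : f 1 = 0) : f = 0 := by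
  have hpos (x : A) (hx : 0 ≤ x) : f x = 0 := by
    refine le_antisymm ?_ (hf x hx)
    simpa [Algebra.algebraMap_eq_smul_one, h1] using
      hf.mono hx.isSelfAdjoint.le_algebraMap_norm_self
  ext x
  obtain ⟨y, hy, -, rfl⟩ := CStarAlgebra.exists_sum_four_nonneg x
  simp [hpos _ (hy _)]

lemma map_one_pos (hf : IsPosFunctional f) (hne : f ≠ 0) : 0 < f 1 :=
  (hf 1 zero_le_one).lt_of_ne fun h => hne (hf.eq_zero_of_map_one_eq_zero h.symm)

end IsPosFunctional

def posDecompositions (f : A →L[ℂ] ℂ) : Set ((A →L[ℂ] ℂ) × (A →L[ℂ] ℂ)) :=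
  {p | IsPosFunctional p.1 ∧ IsPosFunctional p.2 ∧ f = p.1 - p.2}

lemma rSeminorm_eq_iInf {b : A} (hb : 0 ≤ b) (f : A →L[ℂ] ℂ) :
    rSeminorm b f = ⨅ p : posDecompositions f, ((p.1.1 b).re + (p.1.2 b).re) := by
  rw [rSeminorm, iInf, Set.range]
  congr 1
  ext r
  constructor
  · rintro ⟨f₁, f₂, h₁, h₂, hf, hr⟩
    exact ⟨⟨(f₁, f₂), h₁, h₂, hf⟩, by simpa using congr_arg re hr.symm⟩
  · rintro ⟨⟨⟨f₁, f₂⟩, h₁, h₂, hf⟩, rfl⟩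
    refine ⟨f₁, f₂, h₁, h₂, hf, ?_⟩
    push_cast
    rw [h₁.ofReal_re_apply hb, h₂.ofReal_re_apply hb]

lemma rSeminorm_mono {b b' : A} (hb : 0 ≤ b) (h : b ≤ b') (f : A →L[ℂ] ℂ) :
    rSeminorm b f ≤ rSeminorm b' f := by
  rw [rSeminorm_eq_iInf hb, rSeminorm_eq_iInf (hb.trans h)]
  refine ciInf_mono ⟨0, ?_⟩ fun p => add_le_add (p.2.1.re_mono h) (p.2.2.1.re_mono h)
  rintro _ ⟨p, rfl⟩
  exact add_nonneg (p.2.1.re_apply_nonneg hb) (p.2.2.1.re_apply_nonneg hb)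

lemma rSeminorm_smul {b : A} (hb : 0 ≤ b) {K : ℝ} (hK : 0 ≤ K) (f : A →L[ℂ] ℂ) :
    rSeminorm (K • b) f = K * rSeminorm b f := by
  rw [rSeminorm_eq_iInf (smul_nonneg hK hb), rSeminorm_eq_iInf hb, Real.mul_iInf_of_nonneg hK]
  simp [ContinuousLinearMap.map_smul_of_tower, mul_add]

lemma IsSelfAdjoint.norm_add_algebraMap_I_sq_le {B : Type*} [CStarAlgebra B] [Nontrivial B]
    {x : B} (hx : IsSelfAdjoint x) (t : ℝ) :
    ‖x + algebraMap ℂ B (t * I)‖ ^ 2 ≤ ‖x‖ ^ 2 + t ^ 2 := by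
  set c := algebraMap ℂ B (t * I)
  have hc : star c = -c := by
    rw [← algebraMap_star_comm, ← map_neg]
    simp
  have hcx : x * c = c * x := (Algebra.commutes _ x).symm
  have hcc : c * c = -algebraMap ℂ B ((t : ℂ) ^ 2) := by
    rw [← map_mul, ← map_neg]
    ring_nf
    simp
  have hstar : star (x + c) * (x + c) = x * x + algebraMap ℂ B ((t : ℂ) ^ 2) := by
    rw [star_add, hx.star_eq, hc]
    calc (x + -c) * (x + c) = x * x - c * c + (x * c - c * x) := by noncomm_ring
      _ = _ := by rw [hcx, sub_self, add_zero, hcc, sub_neg_eq_add]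
  calc ‖x + c‖ ^ 2 = ‖star (x + c) * (x + c)‖ := by rw [CStarRing.norm_star_mul_self, sq]
    _ ≤ ‖x * x‖ + ‖algebraMap ℂ B ((t : ℂ) ^ 2)‖ := hstar ▸ norm_add_le _ _
    _ = ‖x‖ ^ 2 + t ^ 2 := by rw [hx.norm_mul_self, norm_algebraMap']; simp [sq]

lemma im_apply_eq_zero_of_norm_le_one {B : Type*} [CStarAlgebra B] {g : B →L[ℂ] ℂ}
    (hg1 : g 1 = 1) (hg : ‖g‖ ≤ 1) {x : B} (hx : IsSelfAdjoint x) : (g x).im = 0 := by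
  have : Nontrivial B := ⟨1, 0, fun h => by simp [h] at hg1⟩
  have key (t : ℝ) : (g x).re ^ 2 + (g x).im ^ 2 + 2 * t * (g x).im ≤ ‖x‖ ^ 2 := by
    have hgy : ‖g (x + algebraMap ℂ B (t * I))‖ ≤ ‖x + algebraMap ℂ B (t * I)‖ := by
      simpa using g.le_of_opNorm_le hg (x + algebraMap ℂ B (t * I))
    have hsq := (pow_le_pow_left₀ (norm_nonneg _) hgy 2).trans (hx.norm_add_algebraMap_I_sq_le t)
    rw [map_add, Algebra.algebraMap_eq_smul_one, map_smul, hg1, smul_eq_mul, mul_one,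
      ← normSq_eq_norm_sq, normSq_apply] at hsq
    simp only [add_re, add_im, mul_re, mul_im, ofReal_re, ofReal_im, I_re, I_im] at hsq
    nlinarith
  by_contra h
  -- `key` is linear in `t` with slope `2 * (g x).im`, so a nonzero slope violates it somewhere.
  have := key ((‖x‖ ^ 2 + 1) / (2 * (g x).im))
  field_simp at this
  nlinarith [sq_nonneg (g x).re, sq_nonneg (g x).im]

lemma re_apply_nonneg_of_norm_le_one {g : A →L[ℂ] ℂ} (hg1 : g 1 = 1) (hg : ‖g‖ ≤ 1) {x : A}
    (hx : 0 ≤ x) : 0 ≤ (g x).re := by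
  have hu : ‖algebraMap ℝ A ‖x‖ - x‖ ≤ ‖x‖ :=
    ((CStarAlgebra.mem_Icc_algebraMap_iff_norm_le (norm_nonneg x)).1
      ⟨sub_nonneg.2 hx.isSelfAdjoint.le_algebraMap_norm_self, sub_le_self _ hx⟩).2
  have hgu : g (algebraMap ℝ A ‖x‖ - x) = ‖x‖ - g x := by
    simp [Algebra.algebraMap_eq_smul_one, hg1]
  have := (re_le_norm _).trans ((g.le_of_opNorm_le hg _).trans ((one_mul _).trans_le hu))
  rw [hgu] at this
  simpa using this

lemma isPosFunctional_of_norm_le_one {g : A →L[ℂ] ℂ} (hg1 : g 1 = 1) (hg : ‖g‖ ≤ 1) :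
    IsPosFunctional g := fun _ hx =>
  nonneg_iff.2 ⟨re_apply_nonneg_of_norm_le_one hg1 hg hx,
    (im_apply_eq_zero_of_norm_le_one hg1 hg hx.isSelfAdjoint).symm⟩

lemma exists_map_one_eq_one_norm_le_one_map_eq_zero {B : Type*} [CStarAlgebra B] {a : B}
    [IsStarNormal a] (ha : ¬IsUnit a) : ∃ g : B →L[ℂ] ℂ, g 1 = 1 ∧ ‖g‖ ≤ 1 ∧ g a = 0 := by
  have : Nontrivial B := not_subsingleton_iff_nontrivial.1 fun _ => ha (isUnit_of_subsingleton a)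
  obtain ⟨φ, hφ⟩ := (StarAlgebra.elemental.bijective_characterSpaceToSpectrum a).2
    ⟨0, spectrum.zero_mem ℂ ha⟩
  set S := StarAlgebra.elemental ℂ a
  obtain ⟨g, hg, hgφ⟩ := exists_extension_norm_eq (Subalgebra.toSubmodule S.toSubalgebra)
    (WeakDual.toStrongDual (φ : WeakDual ℂ S))
  refine ⟨g, (hg ⟨1, one_mem S⟩).trans (map_one φ), ?_,
    (hg ⟨a, StarAlgebra.elemental.self_mem ℂ a⟩).trans (congr_arg Subtype.val hφ)⟩
  exact hgφ ▸ (WeakDual.CharacterSpace.norm_le_norm_one φ).trans norm_one.le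

lemma IsUnit.exists_pos_algebraMap_le {a : A} (hu : IsUnit a) (ha : 0 ≤ a) :
    ∃ r > 0, algebraMap ℝ A r ≤ a := by
  cases subsingleton_or_nontrivial A
  · exact ⟨1, one_pos, (Subsingleton.elim _ _).le⟩
  have hpos := hu.isStrictlyPositive ha
  exact (CFC.exists_pos_algebraMap_le_iff hpos.isSelfAdjoint).2 fun x hx => hpos.spectrum_pos hx

lemma isUnit_iff_forall_isPosFunctional_pos {a : A} (ha : 0 ≤ a) :
    IsUnit a ↔ ∀ f : A →L[ℂ] ℂ, IsPosFunctional f → f ≠ 0 → 0 < f a := by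
  refine ⟨fun hu f hf hne => ?_, fun h => ?_⟩
  · obtain ⟨r, hr, hra⟩ := hu.exists_pos_algebraMap_le ha
    calc 0 < (r : ℂ) * f 1 := mul_pos (by exact_mod_cast hr) (hf.map_one_pos hne)
      _ = f (algebraMap ℝ A r) := by simp [Algebra.algebraMap_eq_smul_one]
      _ ≤ f a := hf.mono hra
  · by_contra hu
    have := ha.isSelfAdjoint.isStarNormal
    obtain ⟨g, hg1, hg, hga⟩ := exists_map_one_eq_one_norm_le_one_map_eq_zero hu
    have hne : g ≠ 0 := fun h => by simp [h] at hg1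
    simpa [hga] using h g (isPosFunctional_of_norm_le_one hg1 hg) hne

lemma smul_le_mul_self_of_algebraMap_le {a : A} (ha : 0 ≤ a) {r : ℝ} (h : algebraMap ℝ A r ≤ a) :
    r • a ≤ a * a := by
  have := (Commute.refl a).sub_right (Algebra.commute_algebraMap_right r a) |>.mul_nonneg ha
    (sub_nonneg.2 h)
  rwa [mul_sub, ← Algebra.commutes, ← Algebra.smul_def, sub_nonneg] at this

lemma mul_self_le_smul_of_le_algebraMap {a : A} (ha : 0 ≤ a) {r : ℝ} (h : a ≤ algebraMap ℝ A r) :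
    a * a ≤ r • a := by
  have := (Algebra.commute_algebraMap_right r a).sub_right (Commute.refl a) |>.mul_nonneg ha
    (sub_nonneg.2 h)
  rwa [mul_sub, ← Algebra.commutes, ← Algebra.smul_def, sub_nonneg] at this

/-- A positive element `a` is invertible iff `f(a) > 0` for every nonzero positive
functional `f` and `r_{a^α}` is equivalent to `r_{a^β}` for some `0 < α < β`. -/
theorem isUnit_iff_faithful_and_rpow_equiv (a : A) (ha : 0 ≤ a) :
    IsUnit a ↔
      ((∀ f : A →L[ℂ] ℂ, IsPosFunctional f → f ≠ 0 → 0 < f a) ∧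
        ∃ α β c C : ℝ, 0 < α ∧ α < β ∧ 0 < c ∧ 0 < C ∧
          ∀ f : A →L[ℂ] ℂ, IsHermitianFunctional f →
            c * rSeminorm (a ^ α) f ≤ rSeminorm (a ^ β) f ∧
              rSeminorm (a ^ β) f ≤ C * rSeminorm (a ^ α) f) := by
  rw [← isUnit_iff_forall_isPosFunctional_pos ha]
  refine ⟨fun hu => ⟨hu, ?_⟩, And.left⟩
  obtain ⟨r, hr, hra⟩ := hu.exists_pos_algebraMap_le ha
  have haC : a ≤ algebraMap ℝ A (‖a‖ + 1) :=
    ha.isSelfAdjoint.le_algebraMap_norm_self.trans (algebraMap_mono A (by linarith))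
  have haa : a ^ (2 : ℝ) = a * a := by simpa [sq] using CFC.rpow_natCast a 2 ha
  refine ⟨1, 2, r, ‖a‖ + 1, one_pos, one_lt_two, hr, by positivity, fun f _ => ⟨?_, ?_⟩⟩
  all_goals rw [CFC.rpow_one a, haa]
  · rw [← rSeminorm_smul ha hr.le]
    exact rSeminorm_mono (smul_nonneg hr.le ha) (smul_le_mul_self_of_algebraMap_le ha hra) f
  · rw [← rSeminorm_smul ha (by positivity)]
    exact rSeminorm_mono ha.isSelfAdjoint.mul_self_nonneg
      (mul_self_le_smul_of_le_algebraMap ha haC) f
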